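/- arXiv:1905.10354 — 2 statements merged into one kernel-verified Lean document; each statement's English description precedes it below -/
import Mathlib

section
/- For positive integers n, q and p_1, …, p_q with p = Σ_{i=1}^q p_i < n, define σ_{n,q}^2 = 2 log( Π_{i=1}^q (1 − p_i/n) / (1 − p/n) ). If q_n → ∞, p_i/n → λ_i ∈ (0,1) for each fixed i, p/n → c < 1, and Σ_{i=1}^∞ λ_i = c, then σ_{n−1, q_n}^2 → σ^2 := 2 log((1−c)^{−1} Π_{i=1}^∞ (1 − λ_i)) as n → ∞. -/
/-!
Put `x_{n,i} = p_{n,i} / (n - 1)` and pad each row with zeros to a sequence in `ℓ¹(ℕ)`. The rows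
are nonnegative, converge coordinatewise to `λ`, and their total mass converges to `c = ∑ λ_i`;
by Scheffé's lemma they converge to `λ` in `ℓ¹`. Each entry is bounded by the total mass, hence
eventually by some `a < 1`, and `t ↦ log (1 - t)` is Lipschitz on `(-∞, a]`, so
`∑ log (1 - x_{n,i}) → ∑ log (1 - λ_i)`. The rest is the algebra of `log`.
-/

open MeasureTheory Filter Finset
open scoped Topology BigOperators NNReal

theorem Real.log_le_log_add_mul_dist {b x y : ℝ} (hb : 0 < b) (hy : b ≤ y) (hx : 0 < x) :
    Real.log x ≤ Real.log y + b⁻¹ * dist x y := by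
  have hy0 : 0 < y := hb.trans_le hy
  have hxy : Real.log x - Real.log y ≤ (x - y) / y := by
    rw [← Real.log_div hx.ne' hy0.ne']
    calc Real.log (x / y) ≤ x / y - 1 := Real.log_le_sub_one_of_pos (div_pos hx hy0)
      _ = (x - y) / y := by field_simp
  have hbound : (x - y) / y ≤ b⁻¹ * dist x y := by
    rw [div_eq_inv_mul, Real.dist_eq]
    calc y⁻¹ * (x - y) ≤ y⁻¹ * |x - y| := by gcongr; exact le_abs_self _
      _ ≤ b⁻¹ * |x - y| := by gcongr
  linarith

theorem Real.lipschitzOnWith_log_one_sub {a : ℝ} (ha : a < 1) :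
    LipschitzOnWith (1 - a)⁻¹.toNNReal (fun x => Real.log (1 - x)) (Set.Iic a) := by
  refine LipschitzOnWith.of_le_add_mul' _ fun x hx y hy => ?_
  have h := Real.log_le_log_add_mul_dist (sub_pos.2 ha) (sub_le_sub_left hy 1)
    (sub_pos.2 ((Set.mem_Iic.1 hx).trans_lt ha))
  rwa [dist_sub_left] at h

section LipschitzTsum

variable {ι : Type*} {φ : ℝ → ℝ} {s : Set ℝ} {K : ℝ≥0}

theorem LipschitzOnWith.summable_comp (hφ : LipschitzOnWith K φ s) (hφ0 : φ 0 = 0) (h0 : 0 ∈ s)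
    {g : ι → ℝ} (hgs : ∀ i, g i ∈ s) (hg : Summable g) : Summable fun i => φ (g i) := by
  refine (hg.abs.mul_left (K : ℝ)).of_norm_bounded fun i => ?_
  simpa [hφ0] using hφ.dist_le_mul (g i) (hgs i) 0 h0

theorem LipschitzOnWith.tendsto_tsum_comp {α : Type*} {l : Filter α} (hφ : LipschitzOnWith K φ s)
    (hφ0 : φ 0 = 0) (h0 : 0 ∈ s) {f : α → ι → ℝ} {g : ι → ℝ} (hf : ∀ n, Summable (f n))
    (hg : Summable g) (hfs : ∀ᶠ n in l, ∀ i, f n i ∈ s) (hgs : ∀ i, g i ∈ s)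
    (hfg : Tendsto (fun n => ∑' i, |f n i - g i|) l (𝓝 0)) :
    Tendsto (fun n => ∑' i, φ (f n i)) l (𝓝 (∑' i, φ (g i))) := by
  rw [tendsto_iff_norm_sub_tendsto_zero]
  refine squeeze_zero' (Eventually.of_forall fun _ => norm_nonneg _) ?_
    (by simpa using hfg.const_mul (K : ℝ))
  filter_upwards [hfs] with n hn
  have hφf := hφ.summable_comp hφ0 h0 hn (hf n)
  have hφg := hφ.summable_comp hφ0 h0 hgs hg
  rw [← hφf.tsum_sub hφg, ← tsum_mul_left]
  exact (norm_tsum_le_tsum_norm (hφf.sub hφg).norm).trans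
    (Summable.tsum_le_tsum (fun i => hφ.dist_le_mul _ (hn i) _ (hgs i)) (hφf.sub hφg).norm
      (((hf n).sub hg).abs.mul_left _))

end LipschitzTsum

theorem abs_min_le_abs_of_nonneg {α : Type*} [AddCommGroup α] [LinearOrder α]
    [IsOrderedAddMonoid α] {a b : α} (ha : 0 ≤ a) : |min a b| ≤ |b| :=
  abs_le.2 ⟨le_min ((neg_nonpos.2 (abs_nonneg b)).trans ha) (neg_abs_le b),
    (min_le_right a b).trans (le_abs_self b)⟩

theorem tendsto_tsum_abs_sub_of_tendsto_tsum {ι α : Type*} {l : Filter α} {f : α → ι → ℝ}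
    {g : ι → ℝ} (hf0 : ∀ᶠ n in l, ∀ i, 0 ≤ f n i) (hf : ∀ n, Summable (f n)) (hg : Summable g)
    (hfg : ∀ i, Tendsto (f · i) l (𝓝 (g i)))
    (hsum : Tendsto (fun n => ∑' i, f n i) l (𝓝 (∑' i, g i))) :
    Tendsto (fun n => ∑' i, |f n i - g i|) l (𝓝 0) := by
  -- `|u - v| = u + v - 2 min u v`, and the `min` terms are dominated by `|g|`.
  have hmin : Tendsto (fun n => ∑' i, min (f n i) (g i)) l (𝓝 (∑' i, g i)) := by
    refine tendsto_tsum_of_dominated_convergence hg.abs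
      (fun i => by simpa using (hfg i).min (tendsto_const_nhds (x := g i))) ?_
    filter_upwards [hf0] with n hn i
    exact abs_min_le_abs_of_nonneg (hn i)
  have hlim := (hsum.add_const (∑' i, g i)).sub (hmin.const_mul 2)
  rw [show ∀ S : ℝ, S + S - 2 * S = 0 by intro; ring] at hlim
  refine hlim.congr' ?_
  filter_upwards [hf0] with n hn
  have hmin_summable : Summable fun i => min (f n i) (g i) :=
    hg.abs.of_norm_bounded fun i => abs_min_le_abs_of_nonneg (hn i)
  rw [← (hf n).tsum_add hg, ← tsum_mul_left, ← ((hf n).add hg).tsum_sub (hmin_summable.mul_left 2)]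
  refine tsum_congr fun i => ?_
  linarith [min_add_max (f n i) (g i), max_sub_min_eq_abs (g i) (f n i), min_comm (f n i) (g i),
    max_comm (f n i) (g i)]

theorem tendsto_div_natCast_sub_one {a : ℕ → ℝ} {x : ℝ}
    (h : Tendsto (fun n => a n / n) atTop (𝓝 x)) :
    Tendsto (fun n => a n / ((n : ℝ) - 1)) atTop (𝓝 x) := by
  have := h.mul (tendsto_natCast_div_add_atTop (-1 : ℝ))
  rw [mul_one] at this
  refine this.congr' ?_
  filter_upwards [eventually_ne_atTop 0] with n hn
  rw [div_mul_div_cancel₀ (Nat.cast_ne_zero.2 hn), sub_eq_add_neg]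

theorem tsum_ite_lt_eq_sum_Icc {φ : ℝ → ℝ} (hφ0 : φ 0 = 0) (m : ℕ) (F : ℕ → ℝ) :
    ∑' i, φ (if i < m then F (i + 1) else 0) = ∑ i ∈ Icc 1 m, φ (F i) := by
  rw [tsum_eq_sum (s := range m) fun i hi => by rw [if_neg (by simpa using hi), hφ0],
    ← Ico_add_one_right_eq_Icc, ← zero_add 1, ← sum_Ico_add', ← range_eq_Ico]
  exact sum_congr rfl fun i hi => by rw [if_pos (mem_range.1 hi)]

theorem Real.tprod_one_sub_eq_exp_tsum_log {ι : Type*} {g : ι → ℝ} (hg : Summable g)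
    (hg1 : ∀ i, g i < 1) : ∏' i, (1 - g i) = Real.exp (∑' i, Real.log (1 - g i)) :=
  (Real.rexp_tsum_eq_tprod (fun i => sub_pos.2 (hg1 i))
    (by simpa only [sub_eq_add_neg] using Real.summable_log_one_add_of_summable hg.neg)).symm

theorem Real.log_prod_one_sub_div_one_sub_sum {ι : Type*} (s : Finset ι) {x : ι → ℝ}
    (hx : ∀ i ∈ s, 0 ≤ x i) (hs : ∑ i ∈ s, x i < 1) :
    Real.log ((∏ i ∈ s, (1 - x i)) / (1 - ∑ i ∈ s, x i))
      = ∑ i ∈ s, Real.log (1 - x i) - Real.log (1 - ∑ i ∈ s, x i) := by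
  have hpos : ∀ i ∈ s, 0 < 1 - x i := fun i hi =>
    sub_pos.2 ((single_le_sum hx hi).trans_lt hs)
  rw [Real.log_div (prod_pos hpos).ne' (sub_pos.2 hs).ne',
    Real.log_prod fun i hi => (hpos i hi).ne']

theorem tendsto_sum_Icc_log_one_sub {q : ℕ → ℕ} {x : ℕ → ℕ → ℝ} {g : ℕ → ℝ} {c : ℝ}
    (hq : Tendsto q atTop atTop) (hx0 : ∀ᶠ n in atTop, ∀ i, 0 ≤ x n i) (hg0 : ∀ i, 0 ≤ g i)
    (hx : ∀ i, Tendsto (x · (i + 1)) atTop (𝓝 (g i)))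
    (hxsum : Tendsto (fun n => ∑ i ∈ Icc 1 (q n), x n i) atTop (𝓝 c)) (hg : HasSum g c)
    (hc : c < 1) :
    Tendsto (fun n => ∑ i ∈ Icc 1 (q n), Real.log (1 - x n i)) atTop
      (𝓝 (∑' i, Real.log (1 - g i))) := by
  let y (n i : ℕ) : ℝ := if i < q n then x n (i + 1) else 0
  have hy_tsum (φ : ℝ → ℝ) (hφ0 : φ 0 = 0) (n : ℕ) :
      ∑' i, φ (y n i) = ∑ i ∈ Icc 1 (q n), φ (x n i) :=
    tsum_ite_lt_eq_sum_Icc hφ0 (q n) (x n)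
  have hy_summable (n : ℕ) : Summable (y n) :=
    summable_of_ne_finset_zero (s := range (q n)) fun i hi => if_neg (by simpa using hi)
  have hy0 : ∀ᶠ n in atTop, ∀ i, 0 ≤ y n i := by
    filter_upwards [hx0] with n hn i
    by_cases hi : i < q n <;> simp [y, hi, hn]
  have hy (i : ℕ) : Tendsto (y · i) atTop (𝓝 (g i)) :=
    (hx i).congr' <| by
      filter_upwards [hq.eventually_gt_atTop i] with n hn
      simp [y, hn]
  have hysum : Tendsto (fun n => ∑' i, y n i) atTop (𝓝 (∑' i, g i)) := by
    rw [hg.tsum_eq]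
    exact hxsum.congr fun n => (hy_tsum id rfl n).symm
  obtain ⟨a, hca, ha1⟩ := exists_between hc
  have hya : ∀ᶠ n in atTop, ∀ i, y n i ∈ Set.Iic a := by
    filter_upwards [hy0, hysum.eventually_lt_const (hg.tsum_eq ▸ hca)] with n hn hna i
    exact ((hy_summable n).le_tsum i fun j _ => hn j).trans hna.le
  have hga (i : ℕ) : g i ∈ Set.Iic a := (le_hasSum hg i fun j _ => hg0 j).trans hca.le
  have hlog := (Real.lipschitzOnWith_log_one_sub ha1).tendsto_tsum_comp (by simp)
    ((hg0 0).trans (hga 0)) hy_summable hg.summable hya hga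
    (tendsto_tsum_abs_sub_of_tendsto_tsum hy0 hy_summable hg.summable hy hysum)
  exact hlog.congr (hy_tsum (fun t => Real.log (1 - t)) (by simp))

theorem sigma_nq_limit_general
    (q : ℕ → ℕ) (p : ℕ → ℕ → ℕ) (lam : ℕ → ℝ) (c : ℝ)
    (hq : Tendsto q atTop atTop)
    (hlam : ∀ i, 1 ≤ i → lam i ∈ Set.Ioo (0 : ℝ) 1)
    (hpl : ∀ i, 1 ≤ i → Tendsto (fun n => (p n i : ℝ) / n) atTop (𝓝 (lam i)))
    (hc : c < 1)
    (hpn : Tendsto (fun n => ((∑ i ∈ Finset.Icc 1 (q n), p n i : ℕ) : ℝ) / n)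
      atTop (𝓝 c))
    (hsum : HasSum (fun i : ℕ => lam (i + 1)) c) :
    Tendsto (fun n =>
        2 * Real.log ((∏ i ∈ Finset.Icc 1 (q n), (1 - (p n i : ℝ) / ((n : ℝ) - 1)))
          / (1 - ((∑ i ∈ Finset.Icc 1 (q n), p n i : ℕ) : ℝ) / ((n : ℝ) - 1))))
      atTop (𝓝 (2 * Real.log ((1 - c)⁻¹ * ∏' i : ℕ, (1 - lam (i + 1))))) := by
  let x (n i : ℕ) : ℝ := (p n i : ℝ) / ((n : ℝ) - 1)
  have hlam_succ (i : ℕ) := hlam (i + 1) (Nat.le_add_left 1 i)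
  have hxsum (n : ℕ) :
      ((∑ i ∈ Icc 1 (q n), p n i : ℕ) : ℝ) / ((n : ℝ) - 1) = ∑ i ∈ Icc 1 (q n), x n i := by
    push_cast
    exact sum_div ..
  have hx0 : ∀ᶠ n in atTop, ∀ i, 0 ≤ x n i := by
    filter_upwards [eventually_ge_atTop 1] with n hn i
    exact div_nonneg (Nat.cast_nonneg _) (sub_nonneg.2 (Nat.one_le_cast.2 hn))
  have ht : Tendsto (fun n => ∑ i ∈ Icc 1 (q n), x n i) atTop (𝓝 c) := by
    simpa only [hxsum] using tendsto_div_natCast_sub_one hpn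
  have hlog := tendsto_sum_Icc_log_one_sub hq hx0 (fun i => (hlam_succ i).1.le)
    (fun i => tendsto_div_natCast_sub_one (hpl (i + 1) (Nat.le_add_left 1 i))) ht hsum hc
  rw [Real.tprod_one_sub_eq_exp_tsum_log hsum.summable fun i => (hlam_succ i).2,
    Real.log_mul (inv_ne_zero (sub_pos.2 hc).ne') (Real.exp_ne_zero _), Real.log_inv,
    Real.log_exp, neg_add_eq_sub]
  refine ((hlog.sub ((tendsto_const_nhds.sub ht).log (sub_pos.2 hc).ne')).const_mul 2).congr' ?_
  filter_upwards [hx0, ht.eventually_lt_const hc] with n hn hn1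
  rw [hxsum, Real.log_prod_one_sub_div_one_sub_sum _ (fun i _ => hn i) hn1]

/-- With `σ_{n,q}² = 2 log( ∏_{i=1}^q (1 − p_i/n) / (1 − p/n) )`, the sequence
`σ_{n−1,q_n}²` converges to `σ² = 2 log((1−c)⁻¹ ∏_{i=1}^∞ (1 − λ_i))`. -/
theorem sigma_nq_limit
    (q : ℕ → ℕ) (p : ℕ → ℕ → ℕ) (lam : ℕ → ℝ) (c : ℝ)
    (hpos : ∀ n, ∀ i ∈ Finset.Icc 1 (q n), 0 < p n i)
    -- p = ∑_{i=1}^{q_n} p_i < n − 1 (eventually), so that σ²_{n−1,q_n} is well defined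
    (hnp : ∀ᶠ n in atTop, (∑ i ∈ Finset.Icc 1 (q n), p n i) < n - 1)
    (hq : Tendsto q atTop atTop)
    (hlam : ∀ i, 1 ≤ i → lam i ∈ Set.Ioo (0 : ℝ) 1)
    (hpl : ∀ i, 1 ≤ i → Tendsto (fun n => (p n i : ℝ) / n) atTop (𝓝 (lam i)))
    (hc : c < 1)
    (hpn : Tendsto (fun n => ((∑ i ∈ Finset.Icc 1 (q n), p n i : ℕ) : ℝ) / n)
      atTop (𝓝 c))
    (hsum : HasSum (fun i : ℕ => lam (i + 1)) c) :
    Tendsto (fun n =>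
        2 * Real.log ((∏ i ∈ Finset.Icc 1 (q n), (1 - (p n i : ℝ) / ((n : ℝ) - 1)))
          / (1 - ((∑ i ∈ Finset.Icc 1 (q n), p n i : ℕ) : ℝ) / ((n : ℝ) - 1))))
      atTop (𝓝 (2 * Real.log ((1 - c)⁻¹ * ∏' i : ℕ, (1 - lam (i + 1))))) :=
  sigma_nq_limit_general q p lam c hq hlam hpl hc hpn hsum
end

section
/- Let p = p(n) and p_1 = p_1(n) be sequences of positive integers with p_1 < p < n, p/n → c ∈ (0,1) and p_1/n → λ_1 ∈ (0, c). Then Σ_{i = n − p}^{n − p_1 − 1} ψ_1(i/2) converges as n → ∞ to 2 log((1 − λ_1)/(1 − c)). -/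
open MeasureTheory Filter Finset
open scoped Topology BigOperators

/-- The digamma function `ψ₀(x) = (d/dx) log Γ(x)`. -/
noncomputable def digamma (x : ℝ) : ℝ := deriv (fun y => Real.log (Real.Gamma y)) x

/-- The trigamma function `ψ₁(x) = (d²/dx²) log Γ(x)`. -/
noncomputable def trigamma (x : ℝ) : ℝ := deriv digamma x

/-!
Differentiating the limit formula `log Γ(x) = lim (x log n + log n! - ∑_{j ≤ n} log (x + j))`
twice gives `ψ₁(x) = ∑_k 1 / (x + k)²`. Comparing termwise with the telescoping series
`∑_k 1 / ((x + k)(x + k + 1)) = 1 / x` and `∑_k 1 / ((x + k - 1/2)(x + k + 1/2)) = 1 / (x - 1/2)`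
gives `2 / i ≤ ψ₁(i / 2) ≤ 2 / (i - 1)`. Summing over `i ∈ [a, b)` and comparing `1 / t` with
`log (t + 1) - log t` squeezes the block sum between `2 log (b / a)` and
`2 log ((b - 2) / (a - 2))`; with `a = n - p`, `b = n - p₁` both bounds tend to
`2 log ((1 - λ₁) / (1 - c))`.
-/

open Real Set

local notation "γ" => eulerMascheroniConstant

lemma summable_one_div_add_sq {a : ℝ} (ha : 0 < a) : Summable fun k : ℕ => 1 / (a + k) ^ 2 :=
  ((summable_one_div_nat_add_rpow a 2).mpr one_lt_two).congr fun k => by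
    rw [abs_of_pos (by positivity), rpow_two, add_comm]

lemma hasSum_one_div_mul_add_one {y : ℝ} (hy : 0 < y) :
    HasSum (fun k : ℕ => 1 / ((y + k) * (y + k + 1))) (1 / y) := by
  have hterm (k : ℕ) : 1 / ((y + k) * (y + k + 1)) = 1 / (y + k) - 1 / (y + (k + 1 : ℕ)) := by
    push_cast
    field_simp
    ring
  refine (hasSum_iff_tendsto_nat_of_nonneg (fun k => by positivity) _).mpr ?_
  simp_rw [hterm, sum_range_sub', Nat.cast_zero, add_zero]
  have hvanish : Tendsto (fun n : ℕ => 1 / (y + n)) atTop (𝓝 0) := by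
    simp only [one_div]
    exact (tendsto_atTop_add_const_left _ y tendsto_natCast_atTop_atTop).inv_tendsto_atTop
  simpa using tendsto_const_nhds.sub hvanish

lemma hasDerivAt_logGammaSeq (n : ℕ) {y : ℝ} (hy : 0 < y) :
    HasDerivAt (fun z => BohrMollerup.logGammaSeq z n)
      (log n - ∑ j ∈ range (n + 1), 1 / (y + j)) y := by
  refine ((hasDerivAt_mul_const _).add_const _).fun_sub (HasDerivAt.fun_sum fun j _ => ?_)
  simpa [one_div] using ((hasDerivAt_id y).add_const (j : ℝ)).log (by positivity)

lemma tendsto_log_sub_harmonic_succ :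
    Tendsto (fun n : ℕ => log n - harmonic (n + 1)) atTop (𝓝 (-γ)) := by
  have := (tendsto_harmonic_sub_log.add tendsto_one_div_add_atTop_nhds_zero_nat).neg
  rw [add_zero] at this
  refine this.congr fun n => ?_
  push_cast [harmonic_succ]
  ring

lemma abs_one_div_add_one_sub_one_div_add_le {ε R y : ℝ} (hε : 0 < ε) (hε1 : ε ≤ 1)
    (hy : y ∈ Set.Ioo ε R) (j : ℕ) :
    |1 / ((j : ℝ) + 1) - 1 / (y + j)| ≤ (R + 1) / (ε + j) ^ 2 := by
  obtain ⟨hεy, hyR⟩ := hy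
  have hy0 : 0 < y := hε.trans hεy
  have hden : (ε + j) ^ 2 ≤ (j + 1) * (y + j) := by
    rw [sq]; exact mul_le_mul (by linarith) (by linarith) (by positivity) (by positivity)
  have hdiff : 1 / ((j : ℝ) + 1) - 1 / (y + j) = (y - 1) / ((j + 1) * (y + j)) := by
    field_simp; ring
  have hpos : 0 < ((j : ℝ) + 1) * (y + j) := by positivity
  rw [hdiff, abs_div, abs_of_pos hpos]
  exact div_le_div₀ (by linarith) (abs_le.mpr ⟨by linarith, by linarith⟩) (by positivity) hden

lemma tendstoUniformlyOn_log_sub_sum_one_div_add {ε R : ℝ} (hε : 0 < ε) (hε1 : ε ≤ 1) :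
    TendstoUniformlyOn (fun (n : ℕ) (y : ℝ) => log n - ∑ j ∈ range (n + 1), 1 / (y + j))
      (fun y => -γ + ∑' j : ℕ, (1 / ((j : ℝ) + 1) - 1 / (y + j))) atTop (Set.Ioo ε R) := by
  have hseries := (tendstoUniformlyOn_tsum_nat ((summable_one_div_add_sq hε).mul_left (R + 1))
    (f := fun (j : ℕ) (y : ℝ) => 1 / ((j : ℝ) + 1) - 1 / (y + j)) fun j y hy =>
      (abs_one_div_add_one_sub_one_div_add_le hε hε1 hy j).trans_eq (mul_one_div _ _).symm
    ).seq_tendstoUniformlyOn (· + 1) (tendsto_add_atTop_nat 1)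
  refine ((tendsto_log_sub_harmonic_succ.tendstoUniformlyOn_const _).add hseries).congr ?_
  filter_upwards with n y _
  simp only [Pi.add_apply, sum_sub_distrib, harmonic]
  push_cast
  simp only [one_div]
  ring

lemma digamma_eq_tsum {y : ℝ} (hy : 0 < y) :
    digamma y = -γ + ∑' j : ℕ, (1 / ((j : ℝ) + 1) - 1 / (y + j)) := by
  obtain ⟨ε, hε, hεy1⟩ := exists_between (lt_min hy one_pos)
  obtain ⟨hεy, hε1⟩ := lt_min_iff.mp hεy1
  refine (hasDerivAt_of_tendstoUniformlyOn isOpen_Ioo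
    (tendstoUniformlyOn_log_sub_sum_one_div_add hε hε1.le)
    (Eventually.of_forall fun n z hz => hasDerivAt_logGammaSeq n (hε.trans hz.1))
    (fun z hz => BohrMollerup.tendsto_log_gamma (hε.trans hz.1))
    (⟨hεy, lt_add_one y⟩ : y ∈ Set.Ioo ε (y + 1))).deriv

lemma hasDerivAt_tsum_one_div_add_one_sub_one_div_add {y : ℝ} (hy : 0 < y) :
    HasDerivAt (fun z => ∑' j : ℕ, (1 / ((j : ℝ) + 1) - 1 / (z + j)))
      (∑' j : ℕ, 1 / (y + j) ^ 2) y := by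
  obtain ⟨ε, hε, hεy1⟩ := exists_between (lt_min hy one_pos)
  obtain ⟨hεy, hε1⟩ := lt_min_iff.mp hεy1
  -- the series is summable at `z = 1`, where every term vanishes
  refine hasDerivAt_tsum_of_isPreconnected
    (g := fun (j : ℕ) (z : ℝ) => 1 / ((j : ℝ) + 1) - 1 / (z + j))
    (g' := fun (j : ℕ) (z : ℝ) => 1 / (z + j) ^ 2) (summable_one_div_add_sq hε) isOpen_Ioi
    isPreconnected_Ioi (fun j z hz => ?_) (fun j z hz => ?_) (hε1 : (1 : ℝ) ∈ Ioi ε)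
    (by simp [add_comm]) (hεy : y ∈ Ioi ε)
  · have hz0 : z + j ≠ 0 := by have := hε.trans hz; positivity
    simpa [one_div, neg_div] using
      (((hasDerivAt_id z).add_const (j : ℝ)).inv hz0).const_sub (1 / ((j : ℝ) + 1))
  · have hz : ε < z := hz
    rw [norm_of_nonneg (by positivity)]
    gcongr

lemma trigamma_eq_tsum {y : ℝ} (hy : 0 < y) : trigamma y = ∑' k : ℕ, 1 / (y + k) ^ 2 := by
  have : digamma =ᶠ[𝓝 y] fun z => -γ + ∑' j : ℕ, (1 / ((j : ℝ) + 1) - 1 / (z + j)) :=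
    eventually_of_mem (Ioi_mem_nhds hy) fun z hz => digamma_eq_tsum hz
  rw [trigamma, this.deriv_eq,
    ((hasDerivAt_tsum_one_div_add_one_sub_one_div_add hy).const_add _).deriv]

lemma one_div_le_trigamma {y : ℝ} (hy : 0 < y) : 1 / y ≤ trigamma y := by
  rw [trigamma_eq_tsum hy]
  refine hasSum_le (fun k => ?_) (hasSum_one_div_mul_add_one hy)
    (summable_one_div_add_sq hy).hasSum
  apply one_div_le_one_div_of_le (by positivity)
  rw [sq]
  exact mul_le_mul_of_nonneg_left (by linarith) (by positivity)

lemma trigamma_le_one_div_sub_half {y : ℝ} (hy : 1 / 2 < y) : trigamma y ≤ 1 / (y - 1 / 2) := by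
  have hy' : 0 < y - 1 / 2 := by linarith
  rw [trigamma_eq_tsum (by linarith)]
  refine hasSum_le (fun k => ?_) (summable_one_div_add_sq (by linarith)).hasSum
    (hasSum_one_div_mul_add_one hy')
  have hprod : (y - 1 / 2 + k) * (y - 1 / 2 + k + 1) = (y + k) ^ 2 - 1 / 4 := by ring
  exact one_div_le_one_div_of_le (by positivity) (by linarith)

lemma one_div_add_one_le_log_add_one_sub_log {u : ℝ} (hu : 0 < u) :
    1 / (u + 1) ≤ log (u + 1) - log u := by
  have h := one_sub_inv_le_log_of_pos (show 0 < (u + 1) / u by positivity)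
  rw [log_div (by positivity) hu.ne', inv_div] at h
  calc 1 / (u + 1) = 1 - u / (u + 1) := by field_simp; ring
    _ ≤ _ := h

lemma log_add_one_sub_log_le_one_div {u : ℝ} (hu : 0 < u) :
    log (u + 1) - log u ≤ 1 / u := by
  have h := log_le_sub_one_of_pos (show 0 < (u + 1) / u by positivity)
  rw [log_div (by positivity) hu.ne'] at h
  calc log (u + 1) - log u ≤ (u + 1) / u - 1 := h
    _ = 1 / u := by field_simp; ring

lemma log_sub_log_le_sum_Ico (s : ℝ) {a b : ℕ} (hab : a ≤ b) (ha : 0 < a + s) :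
    log (b + s) - log (a + s) ≤ ∑ i ∈ Ico a b, 1 / (i + s) := by
  induction b, hab using Nat.le_induction with
  | base => simp
  | succ b hab ih =>
    have hb : 0 < (b : ℝ) + s := by
      have : (a : ℝ) ≤ b := by exact_mod_cast hab
      linarith
    have := log_add_one_sub_log_le_one_div hb
    rw [sum_Ico_succ_top hab]
    push_cast
    rw [show (b : ℝ) + 1 + s = b + s + 1 by ring]
    linarith

lemma sum_Ico_le_log_sub_log (s : ℝ) {a b : ℕ} (hab : a ≤ b) (ha : 1 < a + s) :
    ∑ i ∈ Ico a b, 1 / (i + s) ≤ log (b + s - 1) - log (a + s - 1) := by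
  induction b, hab using Nat.le_induction with
  | base => simp
  | succ b hab ih =>
    have hb : 0 < (b : ℝ) + s - 1 := by
      have : (a : ℝ) ≤ b := by exact_mod_cast hab
      linarith
    have := one_div_add_one_le_log_add_one_sub_log hb
    rw [sum_Ico_succ_top hab]
    push_cast
    rw [show (b : ℝ) + s - 1 + 1 = b + s by ring] at this
    rw [show (b : ℝ) + 1 + s - 1 = b + s by ring]
    linarith

lemma log_sub_log_le_sum_trigamma_half {a b : ℕ} (ha : 0 < a) (hab : a ≤ b) :
    2 * (log b - log a) ≤ ∑ i ∈ Ico a b, trigamma (i / 2) := by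
  have hlog := log_sub_log_le_sum_Ico 0 hab (by simpa using ha)
  simp only [add_zero] at hlog
  calc 2 * (log b - log a) ≤ ∑ i ∈ Ico a b, 2 * (1 / (i : ℝ)) := by
        rw [← mul_sum]; linarith
    _ ≤ ∑ i ∈ Ico a b, trigamma (i / 2) := sum_le_sum fun i hi => by
        have hi : (0 : ℝ) < i := by exact_mod_cast ha.trans_le (mem_Ico.mp hi).1
        rw [mul_one_div, ← one_div_div]
        exact one_div_le_trigamma (half_pos hi)

lemma sum_trigamma_half_le_log_sub_log {a b : ℕ} (ha : 2 < a) (hab : a ≤ b) :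
    ∑ i ∈ Ico a b, trigamma (i / 2) ≤ 2 * (log (b - 2) - log (a - 2)) := by
  have ha' : (2 : ℝ) < a := by exact_mod_cast ha
  have hlog := sum_Ico_le_log_sub_log (-1) hab (by linarith)
  rw [show (b : ℝ) + -1 - 1 = b - 2 by ring, show (a : ℝ) + -1 - 1 = a - 2 by ring] at hlog
  calc ∑ i ∈ Ico a b, trigamma (i / 2) ≤ ∑ i ∈ Ico a b, 2 * (1 / ((i : ℝ) + -1)) :=
        sum_le_sum fun i hi => by
          have hi : (2 : ℝ) < i := ha'.trans_le (by exact_mod_cast (mem_Ico.mp hi).1)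
          calc trigamma (i / 2) ≤ 1 / (i / 2 - 1 / 2) :=
                trigamma_le_one_div_sub_half (by linarith)
            _ = 2 * (1 / ((i : ℝ) + -1)) := by
              rw [div_sub_div_same, one_div_div, mul_one_div, sub_eq_add_neg]
    _ ≤ 2 * (log (b - 2) - log (a - 2)) := by
        rw [← mul_sum]
        linarith

lemma tendsto_log_add_sub_log_natCast {x : ℕ → ℝ} {α : ℝ} (hα : 0 < α)
    (hx : Tendsto (fun n => x n / n) atTop (𝓝 α)) (s : ℝ) :
    Tendsto (fun n => log (x n + s) - log n) atTop (𝓝 (log α)) := by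
  have hxs : Tendsto (fun n : ℕ => (x n + s) / n) atTop (𝓝 α) := by
    simpa only [add_div, add_zero] using hx.add (tendsto_const_div_atTop_nhds_zero_nat s)
  refine ((continuousAt_log hα.ne').tendsto.comp hxs).congr' ?_
  filter_upwards [hxs.eventually (eventually_gt_nhds hα), eventually_ne_atTop 0] with n hpos hn
  have hxn : x n + s ≠ 0 := fun h => by simp [h] at hpos
  exact log_div hxn (Nat.cast_ne_zero.mpr hn)

lemma tendsto_sum_trigamma_half {a b : ℕ → ℕ} {α β : ℝ} (hα : 0 < α) (hβ : 0 < β)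
    (hab : ∀ᶠ n in atTop, a n ≤ b n) (ha : Tendsto (fun n => (a n : ℝ) / n) atTop (𝓝 α))
    (hb : Tendsto (fun n => (b n : ℝ) / n) atTop (𝓝 β)) :
    Tendsto (fun n => ∑ i ∈ Ico (a n) (b n), trigamma (i / 2)) atTop
      (𝓝 (2 * (log β - log α))) := by
  have hlim (s : ℝ) : Tendsto (fun n => 2 * (log (b n + s) - log (a n + s))) atTop
      (𝓝 (2 * (log β - log α))) :=
    (((tendsto_log_add_sub_log_natCast hβ hb s).sub
      (tendsto_log_add_sub_log_natCast hα ha s)).const_mul 2).congr fun n => by ring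
  have ha_large : ∀ᶠ n in atTop, 2 < a n := by
    filter_upwards [(tendsto_natCast_atTop_atTop.num hα ha).eventually_gt_atTop 2] with n hn
    exact_mod_cast hn
  refine tendsto_of_tendsto_of_tendsto_of_le_of_le' (by simpa using hlim 0)
    (by simpa [sub_eq_add_neg] using hlim (-2)) ?_ ?_
  · filter_upwards [hab, ha_large] with n hn h2
    exact log_sub_log_le_sum_trigamma_half (by omega) hn
  · filter_upwards [hab, ha_large] with n hn h2
    exact sum_trigamma_half_le_log_sub_log h2 hn

lemma tendsto_natCast_sub_div {q : ℕ → ℕ} {L : ℝ} (hq : ∀ᶠ n in atTop, q n ≤ n)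
    (hL : Tendsto (fun n => (q n : ℝ) / n) atTop (𝓝 L)) :
    Tendsto (fun n => ((n - q n : ℕ) : ℝ) / n) atTop (𝓝 (1 - L)) := by
  refine ((tendsto_const_nhds.sub hL).congr' ?_)
  filter_upwards [hq, eventually_ne_atTop 0] with n hqn hn
  rw [Nat.cast_sub hqn, sub_div, div_self (Nat.cast_ne_zero.mpr hn)]

theorem trigamma_block_sum_limit_general
    (p p1 : ℕ → ℕ) (c lam1 : ℝ)
    (hlt : ∀ᶠ n in atTop, p1 n < p n ∧ p n < n)
    (hc : c ∈ Set.Ioo (0 : ℝ) 1)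
    (hlam : lam1 ∈ Set.Ioo (0 : ℝ) c)
    (hpn : Tendsto (fun n => (p n : ℝ) / n) atTop (𝓝 c))
    (hp1n : Tendsto (fun n => (p1 n : ℝ) / n) atTop (𝓝 lam1)) :
    Tendsto (fun n => ∑ i ∈ Finset.Icc (n - p n) (n - p1 n - 1), trigamma ((i : ℝ) / 2))
      atTop (𝓝 (2 * Real.log ((1 - lam1) / (1 - c)))) := by
  obtain ⟨-, hc1⟩ := hc
  obtain ⟨-, hlamc⟩ := hlam
  have hsum := tendsto_sum_trigamma_half (a := fun n => n - p n) (b := fun n => n - p1 n)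
    (by linarith) (by linarith) (hlt.mono fun n hn => by omega)
    (tendsto_natCast_sub_div (hlt.mono fun n hn => hn.2.le) hpn)
    (tendsto_natCast_sub_div (hlt.mono fun n hn => (hn.1.trans hn.2).le) hp1n)
  rw [log_div (by linarith) (by linarith)]
  refine hsum.congr' ?_
  filter_upwards [hlt] with n hn
  rw [← Finset.Ico_add_one_right_eq_Icc, Nat.sub_add_cancel (by omega)]

/-- If `p₁ < p < n`, `p/n → c ∈ (0,1)` and `p₁/n → λ₁ ∈ (0,c)`, then
`∑_{i=n−p}^{n−p₁−1} ψ₁(i/2) → 2 log((1−λ₁)/(1−c))`. -/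
theorem trigamma_block_sum_limit
    (p p1 : ℕ → ℕ) (c lam1 : ℝ)
    (hpos : ∀ n, 0 < p1 n)
    (hlt : ∀ᶠ n in atTop, p1 n < p n ∧ p n < n)
    (hc : c ∈ Set.Ioo (0 : ℝ) 1)
    (hlam : lam1 ∈ Set.Ioo (0 : ℝ) c)
    (hpn : Tendsto (fun n => (p n : ℝ) / n) atTop (𝓝 c))
    (hp1n : Tendsto (fun n => (p1 n : ℝ) / n) atTop (𝓝 lam1)) :
    Tendsto (fun n => ∑ i ∈ Finset.Icc (n - p n) (n - p1 n - 1), trigamma ((i : ℝ) / 2))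
      atTop (𝓝 (2 * Real.log ((1 - lam1) / (1 - c)))) :=
  trigamma_block_sum_limit_general p p1 c lam1 hlt hc hlam hpn hp1n
end
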